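/- arXiv:2104.08977 — 2 statements merged into one kernel-verified Lean document; each statement's English description precedes it below -/
import Mathlib

section
/- For any two random variables $Z, Z'$ supported in $[0,D]$ with CDFs $F_Z, F_{Z'}$, the variances satisfy $|\mathbb{V}(Z) - \mathbb{V}(Z')| \le 3D^2 \, \sup_{t} |F_Z(t) - F_{Z'}(t)|$; i.e., variance is a $3D^2$-Lipschitz risk functional with respect to the sup-norm on CDFs. -/
/-!
Both moments are read off the CDFs through the tail formula `𝔼 W = ∫₀^M (1 - F_W t) dt` for
`W ∈ [0, M]`, so they differ by at most `M ε`, where `ε` is the sup-distance of the CDFs. For the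
mean take `M = D`; for the second moment take `W = Z²`, `M = D²`, whose CDF is `t ↦ F_Z (√t)`.
Finally `|a² - b²| = (a + b) |a - b| ≤ 2D |a - b|` for means `a, b ∈ [0, D]`, giving
`D² ε + 2D · D ε = 3D² ε`.
-/

open Set MeasureTheory

namespace MeasureTheory

variable {Ω Ω' : Type*} [MeasurableSpace Ω] [MeasurableSpace Ω'] {μ : Measure Ω} {μ' : Measure Ω'}

lemma integral_mem_Icc_of_ae_mem_Icc [IsProbabilityMeasure μ] {f : Ω → ℝ} {a b : ℝ}
    (hf : AEMeasurable f μ) (hab : ∀ᵐ ω ∂μ, f ω ∈ Icc a b) : ∫ ω, f ω ∂μ ∈ Icc a b := by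
  have hint := Integrable.of_mem_Icc a b hf hab
  constructor
  · simpa using integral_mono_ae (integrable_const a) hint (hab.mono fun _ h => h.1)
  · simpa using integral_mono_ae hint (integrable_const b) (hab.mono fun _ h => h.2)

lemma integrableOn_Ioc_one_sub_measureReal_le [IsFiniteMeasure μ] (f : Ω → ℝ) (a b : ℝ) :
    IntegrableOn (fun t => 1 - μ.real {ω | f ω ≤ t}) (Ioc a b) := by
  have hmono : Monotone fun t => μ.real {ω | f ω ≤ t} :=
    fun _ _ hst => measureReal_mono fun _ h => le_trans h hst
  exact (integrableOn_const measure_Ioc_lt_top.ne).sub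
    ((hmono.locallyIntegrable.integrableOn_isCompact isCompact_Icc).mono_set Ioc_subset_Icc_self)

lemma integral_eq_integral_Ioc_one_sub_measureReal_le [IsProbabilityMeasure μ] {f : Ω → ℝ}
    {M : ℝ} (hf : Measurable f) (hfM : ∀ᵐ ω ∂μ, f ω ∈ Icc 0 M) :
    ∫ ω, f ω ∂μ = ∫ t in Ioc 0 M, (1 - μ.real {ω | f ω ≤ t}) := by
  rw [(Integrable.of_mem_Icc 0 M hf.aemeasurable hfM).integral_eq_integral_Ioc_meas_le
    (hfM.mono fun _ h => h.1) (hfM.mono fun _ h => h.2)]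
  refine integral_congr_ae ?_
  filter_upwards [meas_le_ae_eq_meas_lt μ (volume.restrict (Ioc 0 M)) f] with t ht
  have hcompl : {ω | t < f ω} = {ω | f ω ≤ t}ᶜ := by ext; simp
  rw [measureReal_def, ht, ← measureReal_def, hcompl,
    probReal_compl_eq_one_sub (measurableSet_le hf measurable_const)]

lemma abs_integral_sub_integral_le_of_abs_cdf_sub_le [IsProbabilityMeasure μ]
    [IsProbabilityMeasure μ'] {f : Ω → ℝ} {g : Ω' → ℝ} {M ε : ℝ}
    (hf : Measurable f) (hg : Measurable g)
    (hfM : ∀ᵐ ω ∂μ, f ω ∈ Icc 0 M) (hgM : ∀ᵐ ω ∂μ', g ω ∈ Icc 0 M)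
    (hε : ∀ t ∈ Ioc 0 M, |μ.real {ω | f ω ≤ t} - μ'.real {ω | g ω ≤ t}| ≤ ε) :
    |∫ ω, f ω ∂μ - ∫ ω, g ω ∂μ'| ≤ M * ε := by
  have hM : 0 ≤ M := by
    obtain ⟨_, h⟩ := hfM.exists
    exact h.1.trans h.2
  rw [integral_eq_integral_Ioc_one_sub_measureReal_le hf hfM,
    integral_eq_integral_Ioc_one_sub_measureReal_le hg hgM]
  calc _ = |∫ t in Ioc 0 M, ((1 - μ.real {ω | f ω ≤ t}) - (1 - μ'.real {ω | g ω ≤ t}))| := by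
        rw [integral_sub (integrableOn_Ioc_one_sub_measureReal_le f 0 M)
          (integrableOn_Ioc_one_sub_measureReal_le g 0 M)]
    _ ≤ ε * volume.real (Ioc 0 M) := by
        rw [← Real.norm_eq_abs]
        refine norm_setIntegral_le_of_norm_le_const measure_Ioc_lt_top fun t ht => ?_
        rw [Real.norm_eq_abs, sub_sub_sub_cancel_left, abs_sub_comm]
        exact hε t ht
    _ = M * ε := by rw [Real.volume_real_Ioc_of_le hM]; ring

lemma measureReal_sq_le_eq_measureReal_le_sqrt {f : Ω → ℝ} (hf : 0 ≤ᵐ[μ] f) {t : ℝ}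
    (ht : 0 ≤ t) : μ.real {ω | f ω ^ 2 ≤ t} = μ.real {ω | f ω ≤ √t} := by
  refine measureReal_congr ?_
  filter_upwards [hf] with ω hω
  exact propext (Real.le_sqrt hω ht).symm

lemma abs_measureReal_sub_le_iSup [IsZeroOrProbabilityMeasure μ] [IsZeroOrProbabilityMeasure μ']
    {ι : Type*} (s : ι → Set Ω) (s' : ι → Set Ω') (i : ι) :
    |μ.real (s i) - μ'.real (s' i)| ≤ ⨆ j, |μ.real (s j) - μ'.real (s' j)| := by
  refine le_ciSup (f := fun j => |μ.real (s j) - μ'.real (s' j)|) ⟨1, ?_⟩ i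
  rintro _ ⟨j, rfl⟩
  exact abs_sub_le_of_nonneg_of_le measureReal_nonneg measureReal_le_one measureReal_nonneg
    measureReal_le_one

end MeasureTheory

lemma abs_sub_sq_sub_sub_sq_le {A B a b D : ℝ} (ha : a ∈ Icc 0 D) (hb : b ∈ Icc 0 D) :
    |(A - a ^ 2) - (B - b ^ 2)| ≤ |A - B| + 2 * D * |a - b| := by
  calc |(A - a ^ 2) - (B - b ^ 2)| = |(A - B) - (a + b) * (a - b)| := by ring_nf
    _ ≤ |A - B| + (a + b) * |a - b| := by
        grw [abs_sub, abs_mul, abs_of_nonneg (add_nonneg ha.1 hb.1)]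
    _ ≤ |A - B| + 2 * D * |a - b| := by gcongr; linarith [ha.2, hb.2]

theorem variance_lipschitz_general
    {Ω Ω' : Type*} [MeasurableSpace Ω] [MeasurableSpace Ω']
    (μ : Measure Ω) (μ' : Measure Ω') [IsProbabilityMeasure μ] [IsProbabilityMeasure μ']
    (D : ℝ)
    (Z : Ω → ℝ) (Z' : Ω' → ℝ) (hZ : Measurable Z) (hZ' : Measurable Z')
    (hZsupp : ∀ᵐ ω ∂μ, Z ω ∈ Icc 0 D) (hZ'supp : ∀ᵐ ω ∂μ', Z' ω ∈ Icc 0 D) :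
    |((∫ ω, (Z ω) ^ 2 ∂μ) - (∫ ω, Z ω ∂μ) ^ 2)
        - ((∫ ω, (Z' ω) ^ 2 ∂μ') - (∫ ω, Z' ω ∂μ') ^ 2)|
      ≤ 3 * D ^ 2 * ⨆ t : ℝ, |(μ {ω | Z ω ≤ t}).toReal - (μ' {ω | Z' ω ≤ t}).toReal| := by
  set ε := ⨆ t : ℝ, |(μ {ω | Z ω ≤ t}).toReal - (μ' {ω | Z' ω ≤ t}).toReal|
  have hcdf (t : ℝ) : |μ.real {ω | Z ω ≤ t} - μ'.real {ω | Z' ω ≤ t}| ≤ ε :=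
    abs_measureReal_sub_le_iSup (fun t => {ω | Z ω ≤ t}) (fun t => {ω | Z' ω ≤ t}) t
  have sq_mem {x : ℝ} (h : x ∈ Icc 0 D) : x ^ 2 ∈ Icc 0 (D ^ 2) :=
    ⟨sq_nonneg x, pow_le_pow_left₀ h.1 h.2 2⟩
  have hmean : |∫ ω, Z ω ∂μ - ∫ ω, Z' ω ∂μ'| ≤ D * ε :=
    abs_integral_sub_integral_le_of_abs_cdf_sub_le hZ hZ' hZsupp hZ'supp
      fun t _ => hcdf t
  have hsecond : |∫ ω, Z ω ^ 2 ∂μ - ∫ ω, Z' ω ^ 2 ∂μ'| ≤ D ^ 2 * ε := by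
    refine abs_integral_sub_integral_le_of_abs_cdf_sub_le (hZ.pow_const 2)
      (hZ'.pow_const 2) (hZsupp.mono fun _ => sq_mem) (hZ'supp.mono fun _ => sq_mem)
      fun t ht => ?_
    rw [measureReal_sq_le_eq_measureReal_le_sqrt (hZsupp.mono fun _ h => h.1) ht.1.le,
      measureReal_sq_le_eq_measureReal_le_sqrt (hZ'supp.mono fun _ h => h.1) ht.1.le]
    exact hcdf _
  have hm := integral_mem_Icc_of_ae_mem_Icc hZ.aemeasurable hZsupp
  have hm' := integral_mem_Icc_of_ae_mem_Icc hZ'.aemeasurable hZ'supp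
  have hD : 0 ≤ D := hm.1.trans hm.2
  calc _ ≤ |∫ ω, Z ω ^ 2 ∂μ - ∫ ω, Z' ω ^ 2 ∂μ'| + 2 * D * |∫ ω, Z ω ∂μ - ∫ ω, Z' ω ∂μ'| :=
        abs_sub_sq_sub_sub_sq_le hm hm'
    _ ≤ D ^ 2 * ε + 2 * D * (D * ε) := by gcongr
    _ = 3 * D ^ 2 * ε := by ring

/-- Lipschitzness of variance (Lemma 4.3): for random variables `Z, Z'` supported in
`[0, D]`, `|Var(Z) - Var(Z')| ≤ 3 D² ⨆ t, |F_Z t - F_{Z'} t|`. -/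
theorem variance_lipschitz
    {Ω Ω' : Type*} [MeasurableSpace Ω] [MeasurableSpace Ω']
    (μ : Measure Ω) (μ' : Measure Ω') [IsProbabilityMeasure μ] [IsProbabilityMeasure μ']
    (D : ℝ) (hD : 0 < D)
    (Z : Ω → ℝ) (Z' : Ω' → ℝ) (hZ : Measurable Z) (hZ' : Measurable Z')
    (hZsupp : ∀ᵐ ω ∂μ, Z ω ∈ Icc 0 D) (hZ'supp : ∀ᵐ ω ∂μ', Z' ω ∈ Icc 0 D) :
    |((∫ ω, (Z ω) ^ 2 ∂μ) - (∫ ω, Z ω ∂μ) ^ 2)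
        - ((∫ ω, (Z' ω) ^ 2 ∂μ') - (∫ ω, Z' ω ∂μ') ^ 2)|
      ≤ 3 * D ^ 2 * ⨆ t : ℝ, |(μ {ω | Z ω ≤ t}).toReal - (μ' {ω | Z' ω ≤ t}).toReal| :=
  variance_lipschitz_general μ μ' D Z Z' hZ hZ' hZsupp hZ'supp
end

section
/- The variance of the doubly robust estimator satisfies, for each $t$: $\mathbb{V}_{\mathbb{P}_\beta}[\widehat{F}_{DR}(t)] = \frac{1}{n}\mathbb{E}_{\mathbb{P}_\beta}[w(A,X)^2\sigma^2(t;X,A)] + \frac{1}{n}\mathbb{V}_{\mathbb{P}_\beta}[\mathbb{E}_{\mathbb{P}_\beta}[w(A,X)G(t;X,A)\mid X]] + \frac{1}{n}\mathbb{E}_{\mathbb{P}_\beta}[\mathbb{V}_{\mathbb{P}_\beta}[w(A,X)(G(t;X,A)-\overline{G}(t;X,A))\mid X]]$. In particular, the third term depends only on the model error $G - \overline{G}$ rather than on $G$ itself. -/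
open Set MeasureTheory ProbabilityTheory
open scoped ENNReal

/-!
The estimator is the sample mean of `n` i.i.d. copies of `F = w (𝟙{R ≤ t} - Ḡ) + Ḡ_π`, so its
variance is `Var[F] / n`. The law of total variance is then applied twice. Given `(X, A)`, `F` is
`w 𝟙{R ≤ t}` plus an `(X, A)`-measurable shift, and an indicator has conditional variance
`G (1 - G)`; this gives `E[w² σ²] + Var[D]` with `D = E[F | X, A] = w (G - Ḡ) + Ḡ_π`. Given `X`,
the `X`-measurable shift `Ḡ_π` leaves the conditional variance `Kd - Hd²` of `w (G - Ḡ)` unchanged,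
and `E[D | X] = Hd + Ḡ_π = Hm`.
-/

section CondVar

variable {Ω : Type*} {m m₀ : MeasurableSpace Ω} {μ : Measure Ω}

lemma variance_eq_integral_add_variance_of_ae_eq [IsProbabilityMeasure μ] (hm : m ≤ m₀)
    {X Z V : Ω → ℝ} (hX : MemLp X 2 μ) (hZ : μ[X | m] =ᵐ[μ] Z) (hV : Var[X; μ | m] =ᵐ[μ] V) :
    Var[X; μ] = μ[V] + Var[Z; μ] := by
  rw [← integral_condVar_add_variance_condExp hm hX, integral_congr_ae hV, variance_congr hZ]

lemma condVar_add_stronglyMeasurable (hm : m ≤ m₀) [SigmaFinite (μ.trim hm)] {X b : Ω → ℝ}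
    (hb : StronglyMeasurable[m] b) (hX : Integrable X μ) (hbi : Integrable b μ) :
    Var[X + b; μ | m] =ᵐ[μ] Var[X; μ | m] := by
  refine condExp_congr_ae ?_
  filter_upwards [condExp_add hX hbi m] with ω hω
  simp [hω, condExp_of_stronglyMeasurable hm hb hbi]

lemma condVar_mul_stronglyMeasurable_left [IsFiniteMeasure μ] {a X : Ω → ℝ}
    (ha : StronglyMeasurable[m] a) (haμ : MemLp a ∞ μ) (hX : MemLp X 2 μ) :
    Var[a * X; μ | m] =ᵐ[μ] a ^ 2 * Var[X; μ | m] := by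
  have hXi : Integrable X μ := hX.integrable one_le_two
  have hdev : Integrable ((X - μ[X | m]) ^ 2) μ := (hX.sub (hX.condExp one_le_two)).integrable_sq
  calc Var[a * X; μ | m]
      =ᵐ[μ] μ[a ^ 2 * (X - μ[X | m]) ^ 2 | m] := by
        refine condExp_congr_ae ?_
        filter_upwards [condExp_mul_of_stronglyMeasurable_left ha (hXi.mul_of_top_right haμ) hXi]
          with ω hω
        simp only [Pi.pow_apply, Pi.mul_apply, Pi.sub_apply, hω]
        ring
    _ =ᵐ[μ] a ^ 2 * Var[X; μ | m] :=
        condExp_mul_of_stronglyMeasurable_left (ha.pow 2)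
          (hdev.mul_of_top_right (by simpa [sq] using haμ.mul haμ)) hdev

lemma condVar_ae_eq_of_sq_eq_self (hm : m ≤ m₀) [IsFiniteMeasure μ] {X : Ω → ℝ}
    (hX : MemLp X 2 μ) (hsq : X ^ 2 = X) :
    Var[X; μ | m] =ᵐ[μ] μ[X | m] * (1 - μ[X | m]) := by
  filter_upwards [condVar_ae_eq_condExp_sq_sub_sq_condExp hm hX] with ω hω
  rw [hω, hsq]
  simp only [Pi.sub_apply, Pi.pow_apply, Pi.mul_apply, Pi.one_apply]
  ring

lemma variance_mul_add_eq_of_sq_eq_self [IsProbabilityMeasure μ] (hm : m ≤ m₀)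
    {a X b G : Ω → ℝ} (ha : StronglyMeasurable[m] a) (haμ : MemLp a ∞ μ)
    (hb : StronglyMeasurable[m] b) (hbμ : MemLp b 2 μ) (hX : MemLp X 2 μ) (hsq : X ^ 2 = X)
    (hG : μ[X | m] =ᵐ[μ] G) :
    Var[a * X + b; μ] = ∫ ω, a ω ^ 2 * (G ω * (1 - G ω)) ∂μ + Var[a * G + b; μ] := by
  have hXi : Integrable X μ := hX.integrable one_le_two
  have hbi : Integrable b μ := hbμ.integrable one_le_two
  have haX : Integrable (a * X) μ := hXi.mul_of_top_right haμ
  refine variance_eq_integral_add_variance_of_ae_eq hm ((hX.mul haμ).add hbμ) ?_ ?_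
  · filter_upwards [condExp_add haX hbi m, condExp_mul_of_stronglyMeasurable_left ha haX hXi, hG]
      with ω h₁ h₂ h₃
    simp only [h₁, Pi.add_apply, h₂, Pi.mul_apply, h₃, condExp_of_stronglyMeasurable hm hb hbi]
  · filter_upwards [condVar_add_stronglyMeasurable hm hb haX hbi,
      condVar_mul_stronglyMeasurable_left ha haμ hX, condVar_ae_eq_of_sq_eq_self hm hX hsq, hG]
      with ω h₁ h₂ h₃ h₄
    simp only [h₁, h₂, Pi.mul_apply, Pi.pow_apply, h₃, h₄, Pi.sub_apply, Pi.one_apply]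

lemma variance_add_stronglyMeasurable_eq [IsProbabilityMeasure μ] (hm : m ≤ m₀)
    {Y b Z K : Ω → ℝ} (hY : MemLp Y 2 μ) (hb : StronglyMeasurable[m] b) (hbμ : MemLp b 2 μ)
    (hZ : μ[Y | m] =ᵐ[μ] Z) (hK : μ[Y ^ 2 | m] =ᵐ[μ] K) :
    Var[Y + b; μ] = ∫ ω, K ω - Z ω ^ 2 ∂μ + Var[Z + b; μ] := by
  have hYi : Integrable Y μ := hY.integrable one_le_two
  have hbi : Integrable b μ := hbμ.integrable one_le_two
  refine variance_eq_integral_add_variance_of_ae_eq hm (hY.add hbμ) ?_ ?_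
  · filter_upwards [condExp_add hYi hbi m, hZ] with ω h₁ h₂
    simp only [h₁, Pi.add_apply, h₂, condExp_of_stronglyMeasurable hm hb hbi]
  · filter_upwards [condVar_add_stronglyMeasurable hm hb hYi hbi,
      condVar_ae_eq_condExp_sq_sub_sq_condExp hm hY, hZ, hK] with ω h₁ h₂ h₃ h₄
    simp only [h₁, h₂, Pi.sub_apply, Pi.pow_apply, h₃, h₄]

end CondVar

section SampleMean

variable {Ω : Type*} [MeasurableSpace Ω] {μ : Measure Ω} [IsProbabilityMeasure μ] {X : Ω → ℝ}

lemma memLp_mean_pi (hX : MemLp X 2 μ) (n : ℕ) :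
    MemLp (fun ω : Fin n → Ω => (1 / (n : ℝ)) * ∑ i, X (ω i)) 2 (Measure.pi fun _ => μ) :=
  (memLp_finsetSum _ fun i _ =>
    hX.comp_measurePreserving (measurePreserving_eval (fun _ => μ) i)).const_mul _

lemma variance_mean_pi (hX : MemLp X 2 μ) (n : ℕ) :
    Var[fun ω : Fin n → Ω => (1 / (n : ℝ)) * ∑ i, X (ω i); Measure.pi fun _ => μ]
      = (1 / (n : ℝ)) * Var[X; μ] := by
  have h := variance_sum_pi (μ := fun _ : Fin n => μ) (X := fun _ => X) fun _ => hX
  rw [show (fun ω : Fin n → Ω => (1 / (n : ℝ)) * ∑ i, X (ω i))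
      = (1 / (n : ℝ)) • ∑ i : Fin n, fun ω : Fin n → Ω => X (ω i) by ext; simp,
    variance_smul, h]
  simp only [Finset.sum_const, Finset.card_univ, Fintype.card_fin, nsmul_eq_mul]
  rcases eq_or_ne (n : ℝ) 0 with hn | hn
  · simp [hn]
  · field_simp

end SampleMean

section DoublyRobust

variable {Ω : Type*} {m₁ m₂ m₀ : MeasurableSpace Ω} {μ : Measure Ω} [IsProbabilityMeasure μ]
  {W I Gb Gπ Gf Hm Hd Kd : Ω → ℝ}

/-- One summand of `F̂_DR(t)`, with `I = 𝟙{R ≤ t}`, `Gb = Ḡ` and `Gπ = Ḡ(·; π)`. Below, the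
σ-algebras `m₁ ≤ m₂` stand for `σ(X) ≤ σ(X, A)`. -/
def drSummand (W I Gb Gπ : Ω → ℝ) : Ω → ℝ := W * (I - Gb) + Gπ

lemma memLp_drSummand (hWμ : MemLp W ∞ μ) (hGbμ : MemLp Gb ∞ μ) (hI : MemLp I 2 μ)
    (hGπ : μ[W * Gb | m₁] =ᵐ[μ] Gπ) : MemLp (drSummand W I Gb Gπ) 2 μ := by
  have hGb2 : MemLp Gb 2 μ := hGbμ.mono_exponent le_top
  exact ((hI.sub hGb2).mul hWμ).add (((hGb2.mul hWμ).condExp one_le_two).ae_eq hGπ)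

lemma variance_drSummand (hm₁₂ : m₁ ≤ m₂) (hm₂ : m₂ ≤ m₀)
    (hW : StronglyMeasurable[m₂] W) (hWμ : MemLp W ∞ μ)
    (hGb : StronglyMeasurable[m₂] Gb) (hGbμ : MemLp Gb ∞ μ) (hGπ : StronglyMeasurable[m₁] Gπ)
    (hI : MemLp I 2 μ) (hII : I ^ 2 = I)
    (hGf : μ[I | m₂] =ᵐ[μ] Gf) (hGπc : μ[W * Gb | m₁] =ᵐ[μ] Gπ) (hHm : μ[W * Gf | m₁] =ᵐ[μ] Hm)
    (hHd : μ[W * (Gf - Gb) | m₁] =ᵐ[μ] Hd) (hKd : μ[(W * (Gf - Gb)) ^ 2 | m₁] =ᵐ[μ] Kd) :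
    Var[drSummand W I Gb Gπ; μ]
      = ∫ ω, W ω ^ 2 * (Gf ω * (1 - Gf ω)) ∂μ + ((∫ ω, Hm ω ^ 2 ∂μ) - (∫ ω, Hm ω ∂μ) ^ 2)
        + ∫ ω, Kd ω - Hd ω ^ 2 ∂μ := by
  have hGb2 : MemLp Gb 2 μ := hGbμ.mono_exponent le_top
  have hGf2 : MemLp Gf 2 μ := (hI.condExp one_le_two).ae_eq hGf
  have hWGb : MemLp (W * Gb) 2 μ := hGb2.mul hWμ
  have hGπ2 : MemLp Gπ 2 μ := (hWGb.condExp one_le_two).ae_eq hGπc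
  have hΔ : MemLp (W * (Gf - Gb)) 2 μ := (hGf2.sub hGb2).mul hWμ
  have hHm2 : MemLp Hm 2 μ := ((hGf2.mul hWμ).condExp one_le_two).ae_eq hHm
  have hHdGπ : Hd + Gπ =ᵐ[μ] Hm := by
    have hWGf : W * Gf = W * (Gf - Gb) + W * Gb := by ring
    rw [hWGf] at hHm
    filter_upwards [condExp_add (hΔ.integrable one_le_two) (hWGb.integrable one_le_two) m₁,
      hHm, hHd, hGπc] with ω h₁ h₂ h₃ h₄
    simp only [Pi.add_apply, ← h₂, h₁, h₃, h₄]
  have hsplit : drSummand W I Gb Gπ = W * I + (Gπ - W * Gb) := by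
    unfold drSummand; ring
  have hmean : W * Gf + (Gπ - W * Gb) = W * (Gf - Gb) + Gπ := by ring
  rw [hsplit, variance_mul_add_eq_of_sq_eq_self hm₂ hW hWμ ((hGπ.mono hm₁₂).sub (hW.mul hGb))
      (hGπ2.sub hWGb) hI hII hGf, hmean,
    variance_add_stronglyMeasurable_eq (hm₁₂.trans hm₂) hΔ hGπ hGπ2 hHd hKd,
    variance_congr hHdGπ, variance_eq_sub hHm2]
  simp only [Pi.pow_apply]
  ring

end DoublyRobust

theorem dr_estimator_variance_general
    {𝒳 𝒜 : Type*} [MeasurableSpace 𝒳] [MeasurableSpace 𝒜]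
    (μβ : Measure (𝒳 × 𝒜 × ℝ)) [IsProbabilityMeasure μβ]
    (w : 𝒳 × 𝒜 → ℝ) (hw : Measurable w) (hw0 : ∀ p, 0 ≤ w p)
    (wmax : ℝ) (hwb : ∀ p, w p ≤ wmax)
    (t : ℝ)
    (Gbar : 𝒳 → 𝒜 → ℝ) (hGbar : Measurable fun p : 𝒳 × 𝒜 => Gbar p.1 p.2)
    (hGbarr : ∀ x a, Gbar x a ∈ Icc (0:ℝ) 1)
    (Gbarπ : 𝒳 → ℝ) (hGbarπ : Measurable Gbarπ)
    (hGbarπcond : μβ[fun p : 𝒳 × 𝒜 × ℝ => w (p.1, p.2.1) * Gbar p.1 p.2.1 |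
        MeasurableSpace.comap (fun p : 𝒳 × 𝒜 × ℝ => p.1) inferInstance]
        =ᵐ[μβ] fun p => Gbarπ p.1)
    (G : 𝒳 × 𝒜 → ℝ)
    (hGcond : μβ[fun p : 𝒳 × 𝒜 × ℝ => if p.2.2 ≤ t then (1:ℝ) else 0 |
        MeasurableSpace.comap (fun p : 𝒳 × 𝒜 × ℝ => (p.1, p.2.1)) inferInstance]
        =ᵐ[μβ] fun p => G (p.1, p.2.1))
    (Hm Hd Kd : 𝒳 → ℝ)
    (hHmcond : μβ[fun p : 𝒳 × 𝒜 × ℝ => w (p.1, p.2.1) * G (p.1, p.2.1) |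
        MeasurableSpace.comap (fun p : 𝒳 × 𝒜 × ℝ => p.1) inferInstance]
        =ᵐ[μβ] fun p => Hm p.1)
    (hHdcond : μβ[fun p : 𝒳 × 𝒜 × ℝ =>
          w (p.1, p.2.1) * (G (p.1, p.2.1) - Gbar p.1 p.2.1) |
        MeasurableSpace.comap (fun p : 𝒳 × 𝒜 × ℝ => p.1) inferInstance]
        =ᵐ[μβ] fun p => Hd p.1)
    (hKdcond : μβ[fun p : 𝒳 × 𝒜 × ℝ =>
          (w (p.1, p.2.1) * (G (p.1, p.2.1) - Gbar p.1 p.2.1)) ^ 2 |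
        MeasurableSpace.comap (fun p : 𝒳 × 𝒜 × ℝ => p.1) inferInstance]
        =ᵐ[μβ] fun p => Kd p.1)
    (n : ℕ) :
    (∫ ωs, ((1 / (n:ℝ)) * ∑ i : Fin n,
          (w ((ωs i).1, (ωs i).2.1) *
              ((if (ωs i).2.2 ≤ t then (1:ℝ) else 0) - Gbar (ωs i).1 (ωs i).2.1)
            + Gbarπ (ωs i).1)) ^ 2
        ∂(Measure.pi fun _ : Fin n => μβ))
      - (∫ ωs, (1 / (n:ℝ)) * ∑ i : Fin n,
          (w ((ωs i).1, (ωs i).2.1) *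
              ((if (ωs i).2.2 ≤ t then (1:ℝ) else 0) - Gbar (ωs i).1 (ωs i).2.1)
            + Gbarπ (ωs i).1)
        ∂(Measure.pi fun _ : Fin n => μβ)) ^ 2
    = (1 / (n:ℝ)) *
        ((∫ p, (w (p.1, p.2.1)) ^ 2 * (G (p.1, p.2.1) * (1 - G (p.1, p.2.1))) ∂μβ)
          + ((∫ p, (Hm p.1) ^ 2 ∂μβ) - (∫ p, Hm p.1 ∂μβ) ^ 2)
          + (∫ p, (Kd p.1 - (Hd p.1) ^ 2) ∂μβ)) := by
  have hXA : Measurable[MeasurableSpace.comap (fun p : 𝒳 × 𝒜 × ℝ => (p.1, p.2.1)) inferInstance]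
      fun p : 𝒳 × 𝒜 × ℝ => (p.1, p.2.1) := comap_measurable _
  have hproj : Measurable fun p : 𝒳 × 𝒜 × ℝ => (p.1, p.2.1) := by fun_prop
  have hWμ : MemLp (fun p : 𝒳 × 𝒜 × ℝ => w (p.1, p.2.1)) ∞ μβ :=
    memLp_top_of_bound (hw.comp hproj).aestronglyMeasurable wmax (.of_forall fun p => by
      rw [Real.norm_eq_abs, abs_of_nonneg (hw0 _)]; exact hwb _)
  have hGbμ : MemLp (fun p : 𝒳 × 𝒜 × ℝ => Gbar p.1 p.2.1) ∞ μβ :=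
    memLp_top_of_bound (hGbar.comp hproj).aestronglyMeasurable 1 (.of_forall fun p => by
      obtain ⟨h0, h1⟩ := hGbarr p.1 p.2.1
      rw [Real.norm_eq_abs, abs_of_nonneg h0]; exact h1)
  set I : 𝒳 × 𝒜 × ℝ → ℝ := fun p => if p.2.2 ≤ t then 1 else 0
  have hI : MemLp I 2 μβ :=
    MemLp.of_bound (Measurable.ite (measurableSet_le (by fun_prop) (by fun_prop))
      measurable_const measurable_const).aestronglyMeasurable 1
      (.of_forall fun p => by by_cases h : p.2.2 ≤ t <;> simp [I, h])
  have hF := memLp_drSummand hWμ hGbμ hI hGbarπcond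
  have hII : I ^ 2 = I := funext fun p => by by_cases h : p.2.2 ≤ t <;> simp [I, h]
  calc _ = Var[fun ωs => (1 / (n:ℝ)) * ∑ i, drSummand _ _ _ _ (ωs i);
        Measure.pi fun _ : Fin n => μβ] := (variance_eq_sub (memLp_mean_pi hF n)).symm
    _ = (1 / (n:ℝ)) * Var[drSummand _ _ _ _; μβ] := variance_mean_pi hF n
    _ = _ := congrArg _ <| variance_drSummand (measurable_fst.comp hXA).comap_le hproj.comap_le
        (hw.comp hXA).stronglyMeasurable hWμ (hGbar.comp hXA).stronglyMeasurable hGbμ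
        (hGbarπ.comp (comap_measurable _)).stronglyMeasurable hI hII
        hGcond hGbarπcond hHmcond hHdcond hKdcond

/-- Variance decomposition of the doubly robust CDF estimator (Lemma 5.2).
`G` is a version of `E[1{R ≤ t} | X, A]` (so `σ² = G (1 - G)`), `Hm` a version of
`E[w G | X]`, `Hd` a version of `E[w (G - Ḡ) | X]`, and `Kd` a version of
`E[(w (G - Ḡ))² | X]`, so the third term `E[V[w (G - Ḡ) | X]] = E[Kd - Hd²]`
depends only on the model error `G - Ḡ`. Then
`V[F̂_DR(t)] = (1/n) (E[w² σ²] + V[Hm] + E[Kd - Hd²])`. -/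
theorem dr_estimator_variance
    {𝒳 𝒜 : Type*} [MeasurableSpace 𝒳] [MeasurableSpace 𝒜]
    (μβ : Measure (𝒳 × 𝒜 × ℝ)) [IsProbabilityMeasure μβ]
    (w : 𝒳 × 𝒜 → ℝ) (hw : Measurable w) (hw0 : ∀ p, 0 ≤ w p)
    (wmax : ℝ) (hwb : ∀ p, w p ≤ wmax)
    (t : ℝ)
    (Gbar : 𝒳 → 𝒜 → ℝ) (hGbar : Measurable fun p : 𝒳 × 𝒜 => Gbar p.1 p.2)
    (hGbarr : ∀ x a, Gbar x a ∈ Icc (0:ℝ) 1)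
    (Gbarπ : 𝒳 → ℝ) (hGbarπ : Measurable Gbarπ)
    (hGbarπcond : μβ[fun p : 𝒳 × 𝒜 × ℝ => w (p.1, p.2.1) * Gbar p.1 p.2.1 |
        MeasurableSpace.comap (fun p : 𝒳 × 𝒜 × ℝ => p.1) inferInstance]
        =ᵐ[μβ] fun p => Gbarπ p.1)
    (G : 𝒳 × 𝒜 → ℝ) (hG : Measurable G) (hGr : ∀ p, G p ∈ Icc (0:ℝ) 1)
    (hGcond : μβ[fun p : 𝒳 × 𝒜 × ℝ => if p.2.2 ≤ t then (1:ℝ) else 0 |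
        MeasurableSpace.comap (fun p : 𝒳 × 𝒜 × ℝ => (p.1, p.2.1)) inferInstance]
        =ᵐ[μβ] fun p => G (p.1, p.2.1))
    (Hm Hd Kd : 𝒳 → ℝ) (hHm : Measurable Hm) (hHd : Measurable Hd) (hKd : Measurable Kd)
    (hHmcond : μβ[fun p : 𝒳 × 𝒜 × ℝ => w (p.1, p.2.1) * G (p.1, p.2.1) |
        MeasurableSpace.comap (fun p : 𝒳 × 𝒜 × ℝ => p.1) inferInstance]
        =ᵐ[μβ] fun p => Hm p.1)
    (hHdcond : μβ[fun p : 𝒳 × 𝒜 × ℝ =>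
          w (p.1, p.2.1) * (G (p.1, p.2.1) - Gbar p.1 p.2.1) |
        MeasurableSpace.comap (fun p : 𝒳 × 𝒜 × ℝ => p.1) inferInstance]
        =ᵐ[μβ] fun p => Hd p.1)
    (hKdcond : μβ[fun p : 𝒳 × 𝒜 × ℝ =>
          (w (p.1, p.2.1) * (G (p.1, p.2.1) - Gbar p.1 p.2.1)) ^ 2 |
        MeasurableSpace.comap (fun p : 𝒳 × 𝒜 × ℝ => p.1) inferInstance]
        =ᵐ[μβ] fun p => Kd p.1)
    (n : ℕ) (hn : 0 < n) :
    (∫ ωs, ((1 / (n:ℝ)) * ∑ i : Fin n,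
          (w ((ωs i).1, (ωs i).2.1) *
              ((if (ωs i).2.2 ≤ t then (1:ℝ) else 0) - Gbar (ωs i).1 (ωs i).2.1)
            + Gbarπ (ωs i).1)) ^ 2
        ∂(Measure.pi fun _ : Fin n => μβ))
      - (∫ ωs, (1 / (n:ℝ)) * ∑ i : Fin n,
          (w ((ωs i).1, (ωs i).2.1) *
              ((if (ωs i).2.2 ≤ t then (1:ℝ) else 0) - Gbar (ωs i).1 (ωs i).2.1)
            + Gbarπ (ωs i).1)
        ∂(Measure.pi fun _ : Fin n => μβ)) ^ 2
    = (1 / (n:ℝ)) *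
        ((∫ p, (w (p.1, p.2.1)) ^ 2 * (G (p.1, p.2.1) * (1 - G (p.1, p.2.1))) ∂μβ)
          + ((∫ p, (Hm p.1) ^ 2 ∂μβ) - (∫ p, Hm p.1 ∂μβ) ^ 2)
          + (∫ p, (Kd p.1 - (Hd p.1) ^ 2) ∂μβ)) :=
  dr_estimator_variance_general μβ w hw hw0 wmax hwb t Gbar hGbar hGbarr Gbarπ hGbarπ hGbarπcond G
    hGcond Hm Hd Kd hHmcond hHdcond hKdcond n
end
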